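/- arXiv:1511.06462 — 2 statements merged into one kernel-verified Lean document; each statement's English description precedes it below -/
import Mathlib

section
/- Let A and B be real symmetric positive semidefinite m×m matrices such that A ⪯ B (i.e., B − A is positive semidefinite) and the column space (range) of A equals the column space of B. Then B† ⪯ A†, where A† and B† denote the Moore–Penrose pseudoinverses of A and B. -/
open Matrix

/-- `P` is the Moore–Penrose pseudoinverse of `A`, characterized by the four
Penrose conditions. -/
def IsMoorePenroseInv {q : Type*} [Fintype q]
    (A P : Matrix q q ℝ) : Prop :=
  A * P * A = A ∧ P * A * P = P ∧ (A * P)ᵀ = A * P ∧ (P * A)ᵀ = P * A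

/-! For psd `A` with pseudoinverse `A†`, completing the square in `(y - A†x)ᵀ A (y - A†x) ≥ 0`
gives `xᵀA†x ≥ 2 yᵀAA†x - yᵀAy` for all `y`. Take `y = B†x`: since `range B ⊆ range A`, the
projection `AA†` fixes the columns of `B`, so `yᵀAA†x = xᵀB†x`, while `A ⪯ B` gives
`yᵀAy ≤ yᵀBy = xᵀB†x`. Hence `xᵀA†x ≥ xᵀB†x`. -/

theorem Matrix.IsSymm.dotProduct_mulVec_comm {α n : Type*} [CommSemiring α] [Fintype n]
    {M : Matrix n n α} (hM : M.IsSymm) (u v : n → α) : u ⬝ᵥ M *ᵥ v = v ⬝ᵥ M *ᵥ u := by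
  rw [dotProduct_mulVec, ← mulVec_transpose, hM.eq, dotProduct_comm]

namespace IsMoorePenroseInv

variable {n : Type*} [Fintype n] {A B M P Q : Matrix n n ℝ}

theorem transpose (h : IsMoorePenroseInv A P) : IsMoorePenroseInv Aᵀ Pᵀ := by
  obtain ⟨h₁, h₂, h₃, h₄⟩ := h
  refine ⟨?_, ?_, ?_, ?_⟩
  · rw [← transpose_mul, ← transpose_mul, ← mul_assoc, h₁]
  · rw [← transpose_mul, ← transpose_mul, ← mul_assoc, h₂]
  · rw [← transpose_mul, transpose_transpose, h₄]
  · rw [← transpose_mul, transpose_transpose, h₃]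

theorem unique (hP : IsMoorePenroseInv A P) (hQ : IsMoorePenroseInv A Q) : P = Q := by
  obtain ⟨hP₁, hP₂, hP₃, hP₄⟩ := hP
  obtain ⟨hQ₁, hQ₂, hQ₃, hQ₄⟩ := hQ
  have hAP : A * P = A * Q :=
    calc A * P = A * Q * A * P := by rw [hQ₁]
      _ = (A * Q)ᵀ * (A * P)ᵀ := by rw [hQ₃, hP₃, mul_assoc]
      _ = (A * P * (A * Q))ᵀ := (transpose_mul _ _).symm
      _ = (A * Q)ᵀ := by rw [← mul_assoc, hP₁]
      _ = A * Q := hQ₃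
  have hPA : P * A = Q * A :=
    calc P * A = P * A * Q * A := by rw [mul_assoc P, mul_assoc P, hQ₁]
      _ = (P * A)ᵀ * (Q * A)ᵀ := by rw [hP₄, hQ₄, mul_assoc (P * A)]
      _ = (Q * A * (P * A))ᵀ := (transpose_mul _ _).symm
      _ = (Q * A)ᵀ := by rw [mul_assoc Q, ← mul_assoc A, hP₁]
      _ = Q * A := hQ₄
  calc P = P * A * P := hP₂.symm
    _ = Q * A * Q := by rw [mul_assoc, hAP, ← mul_assoc, hPA]
    _ = Q := hQ₂

theorem isSymm (hA : A.IsSymm) (h : IsMoorePenroseInv A P) : P.IsSymm :=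
  (hA.eq ▸ h.transpose).unique h

theorem mul_mul_eq_of_range_le (h : IsMoorePenroseInv A P)
    (hBA : LinearMap.range B.mulVecLin ≤ LinearMap.range A.mulVecLin) : A * P * B = B := by
  refine ext_iff_mulVec.mpr fun v => ?_
  obtain ⟨w, hw⟩ := hBA ⟨v, rfl⟩
  change A *ᵥ w = B *ᵥ v at hw
  rw [← mulVec_mulVec, ← hw, mulVec_mulVec, h.1]

theorem mul_eq_self_of_transpose_mul_eq (h : IsMoorePenroseInv B Q) (hM : Bᵀ * M = Bᵀ) :
    Q * M = Q := by
  have hQ : Q = Q * Qᵀ * Bᵀ := by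
    rw [mul_assoc, ← transpose_mul, h.2.2.1, ← mul_assoc, h.2.1]
  rw [hQ, mul_assoc, hM]

theorem dotProduct_mulVec_mulVec_self (h : IsMoorePenroseInv A P) (hP : P.IsSymm) (x : n → ℝ) :
    P *ᵥ x ⬝ᵥ A *ᵥ (P *ᵥ x) = x ⬝ᵥ P *ᵥ x := by
  rw [mulVec_mulVec, dotProduct_comm, dotProduct_mulVec, ← mulVec_transpose, hP.eq, mulVec_mulVec,
    ← mul_assoc, h.2.1, dotProduct_comm]

theorem two_mul_dotProduct_sub_le (hA : A.PosSemidef) (h : IsMoorePenroseInv A P)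
    (x y : n → ℝ) : 2 * (y ⬝ᵥ (A * P) *ᵥ x) - y ⬝ᵥ A *ᵥ y ≤ x ⬝ᵥ P *ᵥ x := by
  have hAs : A.IsSymm := isHermitian_iff_isSymm.mp hA.1
  have hsq := hA.dotProduct_mulVec_nonneg (y - P *ᵥ x)
  rw [star_trivial, mulVec_sub, dotProduct_sub, sub_dotProduct, sub_dotProduct,
    h.dotProduct_mulVec_mulVec_self (h.isSymm hAs), hAs.dotProduct_mulVec_comm (P *ᵥ x),
    mulVec_mulVec] at hsq
  linarith

end IsMoorePenroseInv

theorem pinv_antitone_of_le_of_range_eq_general (m : ℕ)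
    (A B : Matrix (Fin m) (Fin m) ℝ)
    (hA : A.PosSemidef)
    (hAB : (B - A).PosSemidef)
    (hrange : LinearMap.range A.mulVecLin = LinearMap.range B.mulVecLin)
    (Ap Bp : Matrix (Fin m) (Fin m) ℝ)
    (hAp : IsMoorePenroseInv A Ap) (hBp : IsMoorePenroseInv B Bp) :
    (Ap - Bp).PosSemidef := by
  have hAs : A.IsSymm := isHermitian_iff_isSymm.mp hA.1
  have hBs : B.IsSymm := add_sub_cancel A B ▸ isHermitian_iff_isSymm.mp (hA.1.add hAB.1)
  have hBps : Bp.IsSymm := hBp.isSymm hBs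
  have hBpAAp : Bp * (A * Ap) = Bp := by
    refine hBp.mul_eq_self_of_transpose_mul_eq ?_
    rw [← hAp.2.2.1, ← transpose_mul, hAp.mul_mul_eq_of_range_le hrange.ge]
  refine .of_dotProduct_mulVec_nonneg
    (isHermitian_iff_isSymm.mpr ((hAp.isSymm hAs).sub hBps)) fun x => ?_
  have hcross : Bp *ᵥ x ⬝ᵥ (A * Ap) *ᵥ x = x ⬝ᵥ Bp *ᵥ x := by
    rw [dotProduct_comm, hBps.dotProduct_mulVec_comm, mulVec_mulVec, hBpAAp]
  have hle := hAB.dotProduct_mulVec_nonneg (Bp *ᵥ x)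
  rw [star_trivial, sub_mulVec, dotProduct_sub, hBp.dotProduct_mulVec_mulVec_self hBps] at hle
  have hsup := hAp.two_mul_dotProduct_sub_le hA x (Bp *ᵥ x)
  rw [star_trivial, sub_mulVec, dotProduct_sub]
  linarith

/-- **Antitonicity of the Moore–Penrose pseudoinverse on psd matrices with equal
ranges**: if `0 ⪯ A ⪯ B` and `range A = range B`, then `B† ⪯ A†`. -/
theorem pinv_antitone_of_le_of_range_eq (m : ℕ)
    (A B : Matrix (Fin m) (Fin m) ℝ)
    (hA : A.PosSemidef) (hB : B.PosSemidef)
    (hAB : (B - A).PosSemidef)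
    (hrange : LinearMap.range A.mulVecLin = LinearMap.range B.mulVecLin)
    (Ap Bp : Matrix (Fin m) (Fin m) ℝ)
    (hAp : IsMoorePenroseInv A Ap) (hBp : IsMoorePenroseInv B Bp) :
    (Ap - Bp).PosSemidef :=
  pinv_antitone_of_le_of_range_eq_general m A B hA hAB hrange Ap Bp hAp hBp
end

section
/- Let ρ > 0 and let M be a real symmetric p×p matrix with eigendecomposition M = D Λ Dᵀ, where D is orthogonal and Λ is diagonal. Then the matrix T = (1/(2ρ)) · D ( Λ + (Λ² + 4ρ I)^{1/2} ) Dᵀ, where (Λ² + 4ρ I)^{1/2} is the diagonal matrix with entries √(λ_j² + 4ρ) for the diagonal entries λ_j of Λ, is symmetric positive definite and satisfies ρ T − T⁻¹ = M. Moreover, T is the unique symmetric positive definite p×p matrix satisfying ρ T − T⁻¹ = M. -/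
/-!
On `(0, ∞)` the scalar map `t ↦ ρ t - t⁻¹` is inverted by `l ↦ (l + √(l² + 4ρ)) / (2ρ)`, the
positive root of `ρ t² - l t - 1`; applying this inverse to the eigenvalues of `M` in the basis
`D` gives a positive definite solution. For uniqueness, if `T₁, T₂` are positive definite
solutions and `Δ = T₁ - T₂`, then `ρ Δ = T₁⁻¹ - T₂⁻¹ = -T₁⁻¹ Δ T₂⁻¹`, hence
`ρ tr(Δ T₁ Δ T₂) = -tr(Δ²)`. The left side is a trace of a product of positive semidefinite
matrices, so it is nonnegative, and `tr(Δ²) = tr(Δᴴ Δ) ≤ 0` forces `Δ = 0`.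
-/

open Matrix

noncomputable def admmRoot (ρ l : ℝ) : ℝ := (l + √(l ^ 2 + 4 * ρ)) / (2 * ρ)

section admmRoot

variable {ρ : ℝ} (hρ : 0 < ρ) (l : ℝ)
include hρ

theorem admmRoot_pos : 0 < admmRoot ρ l := by
  have hsqrt : |l| < √(l ^ 2 + 4 * ρ) :=
    Real.lt_sqrt_of_sq_lt (by rw [sq_abs]; linarith)
  exact div_pos (by linarith [neg_abs_le l]) (by positivity)

theorem mul_admmRoot_sub_inv : ρ * admmRoot ρ l - (admmRoot ρ l)⁻¹ = l := by
  have hsq : √(l ^ 2 + 4 * ρ) ^ 2 = l ^ 2 + 4 * ρ := Real.sq_sqrt (by positivity)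
  have hne : l + √(l ^ 2 + 4 * ρ) ≠ 0 := by
    intro h
    simpa [admmRoot, h] using admmRoot_pos hρ l
  rw [admmRoot, inv_div]
  generalize √(l ^ 2 + 4 * ρ) = s at *
  field_simp
  linear_combination hsq

end admmRoot

namespace Matrix

variable {n : Type*} [Fintype n]

open scoped ComplexOrder in
theorem PosSemidef.trace_mul_nonneg {𝕜 : Type*} [RCLike 𝕜] {A B : Matrix n n 𝕜}
    (hA : A.PosSemidef) (hB : B.PosSemidef) : 0 ≤ (A * B).trace := by
  classical
  obtain ⟨C, rfl⟩ : ∃ C : Matrix n n 𝕜, A = star C * C := by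
    open scoped MatrixOrder in exact CStarAlgebra.nonneg_iff_eq_star_mul_self.mp hA.nonneg
  rw [Matrix.mul_assoc, trace_mul_comm]
  exact (hB.mul_mul_conjTranspose_same C).trace_nonneg

theorem PosDef.eq_of_smul_sub_inv_eq [DecidableEq n] {ρ : ℝ} (hρ : 0 < ρ) {T₁ T₂ : Matrix n n ℝ}
    (h₁ : T₁.PosDef) (h₂ : T₂.PosDef) (h : ρ • T₁ - T₁⁻¹ = ρ • T₂ - T₂⁻¹) : T₁ = T₂ := by
  set Δ := T₁ - T₂
  have hΔ_herm : Δᴴ = Δ := (h₁.1.sub h₂.1).eq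
  have hcomm : ρ • (T₁ * Δ * T₂) = -Δ := by
    have hρΔ : ρ • Δ = T₁⁻¹ - T₂⁻¹ := by rw [smul_sub]; exact sub_eq_sub_iff_sub_eq_sub.mp h
    rw [← smul_mul_assoc, ← mul_smul_comm, hρΔ, Matrix.mul_sub, Matrix.sub_mul,
      mul_nonsing_inv _ h₁.det_pos.ne'.isUnit, Matrix.mul_assoc,
      nonsing_inv_mul _ h₂.det_pos.ne'.isUnit, Matrix.one_mul, Matrix.mul_one, neg_sub]
  have htrace : ρ * (Δ * T₁ * Δ * T₂).trace = -(Δᴴ * Δ).trace := by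
    rw [hΔ_herm, ← smul_eq_mul, ← trace_smul, ← trace_neg, ← Matrix.mul_neg, ← hcomm,
      mul_smul_comm]
    simp only [Matrix.mul_assoc]
  have hnonneg : 0 ≤ (Δ * T₁ * Δ * T₂).trace := by
    have := h₁.posSemidef.mul_mul_conjTranspose_same Δ
    rw [hΔ_herm] at this
    exact this.trace_mul_nonneg h₂.posSemidef
  have hzero : (Δᴴ * Δ).trace = 0 :=
    le_antisymm (by nlinarith) (posSemidef_conjTranspose_mul_self Δ).trace_nonneg
  exact sub_eq_zero.mp (trace_conjTranspose_mul_self_eq_zero_iff.mp hzero)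

variable [DecidableEq n] {D : Matrix n n ℝ} (hD : Dᵀ * D = 1) (hD' : D * Dᵀ = 1)

include hD hD' in
theorem inv_conj_diagonal {d : n → ℝ} (hd : ∀ i, d i ≠ 0) :
    (D * diagonal d * Dᵀ)⁻¹ = D * diagonal d⁻¹ * Dᵀ := by
  refine inv_eq_left_inv ?_
  have hdiag : diagonal d⁻¹ * diagonal d = 1 := by
    rw [diagonal_mul_diagonal, ← diagonal_one]
    exact congrArg diagonal (funext fun i => inv_mul_cancel₀ (hd i))
  calc D * diagonal d⁻¹ * Dᵀ * (D * diagonal d * Dᵀ)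
      = D * (diagonal d⁻¹ * (Dᵀ * D) * diagonal d) * Dᵀ := by simp only [Matrix.mul_assoc]
    _ = 1 := by rw [hD, Matrix.mul_one, hdiag, Matrix.mul_one, hD']

include hD hD' in
theorem PosDef.conj_diagonal {d : n → ℝ} (hd : ∀ i, 0 < d i) : (D * diagonal d * Dᵀ).PosDef := by
  have hD_unit : IsUnit D := ⟨⟨D, Dᵀ, hD', hD⟩, rfl⟩
  simpa using (PosDef.diagonal hd).mul_mul_conjTranspose_same (vecMul_injective_of_isUnit hD_unit)

include hD hD' in
theorem smul_sub_inv_conj_diagonal (ρ : ℝ) {d : n → ℝ} (hd : ∀ i, d i ≠ 0) :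
    ρ • (D * diagonal d * Dᵀ) - (D * diagonal d * Dᵀ)⁻¹ =
      D * diagonal (fun i => ρ * d i - (d i)⁻¹) * Dᵀ := by
  rw [inv_conj_diagonal hD hD' hd, ← diagonal_sub, Matrix.mul_sub, Matrix.sub_mul,
    ← smul_mul_assoc, ← mul_smul_comm, ← diagonal_smul]
  rfl

end Matrix

theorem admm_T_update_general (p : ℕ) (ρ : ℝ) (hρ : 0 < ρ)
    (M : Matrix (Fin p) (Fin p) ℝ)
    (D L : Matrix (Fin p) (Fin p) ℝ)
    (hD : Dᵀ * D = 1) (hD' : D * Dᵀ = 1) (hL : L.IsDiag)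
    (hdecomp : M = D * L * Dᵀ)
    (T : Matrix (Fin p) (Fin p) ℝ)
    (hT : T = (1 / (2 * ρ)) •
      (D * (L + Matrix.of fun i j =>
        if i = j then Real.sqrt ((L i i) ^ 2 + 4 * ρ) else 0) * Dᵀ)) :
    T.PosDef ∧ ρ • T - T⁻¹ = M ∧
      ∀ T' : Matrix (Fin p) (Fin p) ℝ, T'.PosDef → ρ • T' - T'⁻¹ = M → T' = T := by
  set d : Fin p → ℝ := fun i => admmRoot ρ (L i i)
  have hd : ∀ i, 0 < d i := fun i => admmRoot_pos hρ (L i i)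
  have hTd : T = D * diagonal d * Dᵀ := by
    have hdiag : (1 / (2 * ρ)) • (L + Matrix.of fun i j =>
        if i = j then √((L i i) ^ 2 + 4 * ρ) else 0) = diagonal d := by
      ext i j
      rcases eq_or_ne i j with rfl | hij
      · simp [d, admmRoot, div_eq_inv_mul]
      · simp [hij, hL hij]
    rw [hT, ← smul_mul_assoc, ← mul_smul_comm, hdiag]
  have hsolve : ρ • T - T⁻¹ = M := by
    rw [hTd, smul_sub_inv_conj_diagonal hD hD' ρ fun i => (hd i).ne', hdecomp]
    conv_rhs => rw [← hL.diagonal_diag]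
    congr 3 with i
    exact mul_admmRoot_sub_inv hρ (L i i)
  have hTpos : T.PosDef := hTd ▸ PosDef.conj_diagonal hD hD' hd
  exact ⟨hTpos, hsolve, fun T' hT' h' =>
    hT'.eq_of_smul_sub_inv_eq hρ hTpos (h'.trans hsolve.symm)⟩

/-- **Closed-form solution of the matrix equation `ρT − T⁻¹ = M`** (the
`T`-update of the ADMM iteration). Given an eigendecomposition `M = D Λ Dᵀ`,
the matrix `T = (1/(2ρ)) D (Λ + √(Λ² + 4ρI)) Dᵀ` is the unique symmetric
positive definite solution of `ρT − T⁻¹ = M`. -/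
theorem admm_T_update (p : ℕ) (ρ : ℝ) (hρ : 0 < ρ)
    (M : Matrix (Fin p) (Fin p) ℝ) (hM : M.IsHermitian)
    (D L : Matrix (Fin p) (Fin p) ℝ)
    (hD : Dᵀ * D = 1) (hD' : D * Dᵀ = 1) (hL : L.IsDiag)
    (hdecomp : M = D * L * Dᵀ)
    (T : Matrix (Fin p) (Fin p) ℝ)
    (hT : T = (1 / (2 * ρ)) •
      (D * (L + Matrix.of fun i j =>
        if i = j then Real.sqrt ((L i i) ^ 2 + 4 * ρ) else 0) * Dᵀ)) :
    T.PosDef ∧ ρ • T - T⁻¹ = M ∧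
      ∀ T' : Matrix (Fin p) (Fin p) ℝ, T'.PosDef → ρ • T' - T'⁻¹ = M → T' = T :=
  admm_T_update_general p ρ hρ M D L hD hD' hL hdecomp T hT
end
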